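/- arXiv:2112.05369 — 9 statements merged into one kernel-verified Lean document; each statement's English description precedes it below -/
import Mathlib

section
/- For every real p with 1 ≤ p < ∞ there exists a constant C > 0 such that for every entire function f : ℂ → ℂ and every z ∈ ℂ, |f(z)|^p · exp(−p|z|²/2) ≤ C · ∫_{D(z,1)} |f(w)|^p · exp(−p|w|²/2) dA(w), where D(z,1) is the open disc in ℂ of radius 1 centered at z. -/
/-!
Multiplying `f` by `exp (|z|² / 2 - z̄ w)` gives an entire function `F` with
`|F w|^p = |f w|^p e^{-p|w|²/2} e^{p|z-w|²/2}`: the weighted value of `f` at `z` becomes `|F z|^p`,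
and on `D(z,1)` the two weights differ by at most `e^{p/2}`. Since `F` is holomorphic, integrating
its circle mean values in polar coordinates gives the area mean value property, and Jensen's
inequality for `t ↦ t^p` (`p ≥ 1`) turns it into `|F z|^p ≤ π⁻¹ ∫_{D(z,1)} |F|^p`.
So `C = e^{p/2} / π` works.
-/

open MeasureTheory Metric Set Real ComplexConjugate

theorem ContinuousOn.integrableOn_ball {α F : Type*} [MetricSpace α] [ProperSpace α]
    [MeasurableSpace α] [OpensMeasurableSpace α] {μ : Measure α} [IsFiniteMeasureOnCompacts μ]
    [NormedAddCommGroup F] {f : α → F} {c : α} {R : ℝ} (hf : ContinuousOn f (closedBall c R)) :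
    IntegrableOn f (ball c R) μ :=
  (hf.integrableOn_compact (isCompact_closedBall c R)).mono_set ball_subset_closedBall

theorem Complex.measureReal_ball (c : ℂ) {R : ℝ} (hR : 0 ≤ R) :
    volume.real (ball c R) = π * R ^ 2 := by
  simp [measureReal_def, hR, mul_comm]

theorem Complex.add_polarCoord_symm_eq_circleMap (c : ℂ) (p : ℝ × ℝ) :
    c + Complex.polarCoord.symm p = circleMap c p.1 p.2 := by
  simp only [Complex.polarCoord_symm_apply, circleMap, Complex.exp_mul_I,
    Complex.ofReal_cos, Complex.ofReal_sin]

theorem continuous_circleMap_uncurry (c : ℂ) :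
    Continuous fun p : ℝ × ℝ ↦ circleMap c p.1 p.2 := by
  unfold circleMap; fun_prop

section

variable {E : Type*} [NormedAddCommGroup E] [NormedSpace ℝ E]

theorem norm_setAverage_le_setAverage_norm {α : Type*} [MeasurableSpace α] {μ : Measure α}
    (f : α → E) (s : Set α) : ‖⨍ x in s, f x ∂μ‖ ≤ ⨍ x in s, ‖f x‖ ∂μ := by
  rw [setAverage_eq, setAverage_eq, norm_smul, Real.norm_of_nonneg (by positivity), smul_eq_mul]
  gcongr
  exact norm_integral_le_integral_norm f

theorem integral_Ioo_circleMap_eq_circleAverage (f : ℂ → E) (c : ℂ) (r : ℝ) :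
    ∫ θ in Ioo (-π) π, f (circleMap c r θ) = (2 * π) • circleAverage f c r := by
  have hper := ((periodic_circleMap c r).comp f).intervalIntegral_add_eq (-π) 0
  rw [show -π + 2 * π = π by ring, zero_add] at hper
  rw [circleAverage_def, smul_inv_smul₀ (by positivity), ← integral_Ioc_eq_integral_Ioo,
    ← intervalIntegral.integral_of_le (by linarith [pi_pos])]
  exact hper

theorem setIntegral_ball_eq_setIntegral_polar (f : ℂ → E) (c : ℂ) (R : ℝ) :
    ∫ w in ball c R, f w = ∫ p in Ioo 0 R ×ˢ Ioo (-π) π, p.1 • f (circleMap c p.1 p.2) := by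
  have hpolar : polarCoord.target ∩ (fun p : ℝ × ℝ ↦ circleMap c p.1 p.2) ⁻¹' ball c R =
      Ioo 0 R ×ˢ Ioo (-π) π := by
    ext ⟨r, θ⟩
    simp only [polarCoord_target, mem_inter_iff, mem_prod, mem_Ioi, mem_preimage,
      mem_ball, dist_eq_norm, circleMap_sub_center, norm_circleMap_zero, mem_Ioo]
    grind [abs_of_pos]
  calc ∫ w in ball c R, f w = ∫ u, (ball c R).indicator f (c + u) := by
        rw [integral_add_left_eq_self, integral_indicator measurableSet_ball]
    _ = ∫ p in polarCoord.target, p.1 • (ball c R).indicator f (circleMap c p.1 p.2) := by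
        simp_rw [← Complex.integral_comp_polarCoord_symm, Complex.add_polarCoord_symm_eq_circleMap]
    _ = ∫ p in polarCoord.target,
          ((fun p : ℝ × ℝ ↦ circleMap c p.1 p.2) ⁻¹' ball c R).indicator
            (fun p ↦ p.1 • f (circleMap c p.1 p.2)) p := by
        congr 1 with p
        classical
        rw [indicator_apply, indicator_apply, mem_preimage]
        split_ifs <;> simp
    _ = _ := by
        rw [setIntegral_indicator ((continuous_circleMap_uncurry c).measurable measurableSet_ball),
          hpolar]

theorem setIntegral_ball_eq_intervalIntegral_circleAverage [CompleteSpace E] {f : ℂ → E} {c : ℂ}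
    {R : ℝ} (hR : 0 ≤ R) (hf : ContinuousOn f (closedBall c R)) :
    ∫ w in ball c R, f w = ∫ r in 0..R, (2 * π * r) • circleAverage f c r := by
  have hmaps : MapsTo (fun p : ℝ × ℝ ↦ circleMap c p.1 p.2) (Icc 0 R ×ˢ Icc (-π) π)
      (closedBall c R) := fun p hp ↦
    closedBall_subset_closedBall hp.1.2 (circleMap_mem_closedBall c hp.1.1 p.2)
  have hint : IntegrableOn (fun p : ℝ × ℝ ↦ p.1 • f (circleMap c p.1 p.2))
      (Ioo 0 R ×ˢ Ioo (-π) π) (volume.prod volume) :=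
    ((continuousOn_fst.smul (hf.comp (continuous_circleMap_uncurry c).continuousOn hmaps)
      ).integrableOn_compact (isCompact_Icc.prod isCompact_Icc)).mono_set
      (prod_mono Ioo_subset_Icc_self Ioo_subset_Icc_self)
  rw [setIntegral_ball_eq_setIntegral_polar, Measure.volume_eq_prod, setIntegral_prod _ hint,
    intervalIntegral.integral_of_le hR, integral_Ioc_eq_integral_Ioo]
  refine setIntegral_congr_fun measurableSet_Ioo fun r _ ↦ ?_
  rw [integral_smul, integral_Ioo_circleMap_eq_circleAverage, smul_smul, mul_comm r]

end

theorem DiffContOnCl.setAverage_ball {F : Type*} [NormedAddCommGroup F] [NormedSpace ℂ F]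
    [CompleteSpace F] {f : ℂ → F} {c : ℂ} {R : ℝ} (hf : DiffContOnCl ℂ f (ball c R)) (hR : 0 < R) :
    ⨍ w in ball c R, f w = f c := by
  have hcont : ContinuousOn f (closedBall c R) := closure_ball c hR.ne' ▸ hf.continuousOn
  have hmean : EqOn (fun r ↦ (2 * π * r) • Real.circleAverage f c r) (fun r ↦ (2 * π * r) • f c)
      (uIcc 0 R) := by
    intro r hr
    rw [uIcc_of_le hR.le] at hr
    simp only [(hf.mono (ball_subset_ball (abs_of_nonneg hr.1 ▸ hr.2))).circleAverage]
  rw [setAverage_eq, setIntegral_ball_eq_intervalIntegral_circleAverage hR.le hcont,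
    intervalIntegral.integral_congr hmean, intervalIntegral.integral_smul_const,
    intervalIntegral.integral_const_mul, integral_id, Complex.measureReal_ball c hR.le, smul_smul]
  convert one_smul ℝ (f c)
  field_simp
  ring

theorem DiffContOnCl.norm_rpow_le_setAverage_ball {F : Type*} [NormedAddCommGroup F]
    [NormedSpace ℂ F] [CompleteSpace F] {f : ℂ → F} {c : ℂ} {R : ℝ}
    (hf : DiffContOnCl ℂ f (ball c R)) (hR : 0 < R) {p : ℝ} (hp : 1 ≤ p) :
    ‖f c‖ ^ p ≤ ⨍ w in ball c R, ‖f w‖ ^ p := by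
  have hp₀ : 0 ≤ p := zero_le_one.trans hp
  have hnorm : ContinuousOn (fun w ↦ ‖f w‖) (closedBall c R) :=
    (closure_ball c hR.ne' ▸ hf.continuousOn).norm
  have hvol : volume (ball c R) ≠ 0 := (measure_ball_pos volume c hR).ne'
  calc ‖f c‖ ^ p = ‖⨍ w in ball c R, f w‖ ^ p := by rw [hf.setAverage_ball hR]
    _ ≤ (⨍ w in ball c R, ‖f w‖) ^ p := by gcongr; exact norm_setAverage_le_setAverage_norm f _
    _ ≤ ⨍ w in ball c R, ‖f w‖ ^ p :=
      (convexOn_rpow hp).map_set_average_le (continuousOn_id.rpow_const fun _ _ ↦ Or.inr hp₀)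
        isClosed_Ici hvol measure_ball_lt_top.ne (.of_forall fun w ↦ norm_nonneg (f w))
        hnorm.integrableOn_ball (hnorm.rpow_const fun _ _ ↦ Or.inr hp₀).integrableOn_ball

theorem Complex.norm_mul_exp_rpow (a z w : ℂ) (p : ℝ) :
    ‖a * Complex.exp ((‖z‖ ^ 2 / 2 : ℝ) - conj z * w)‖ ^ p =
      ‖a‖ ^ p * Real.exp (-(p * ‖w‖ ^ 2) / 2) * Real.exp (p * ‖z - w‖ ^ 2 / 2) := by
  have hre : ((‖z‖ ^ 2 / 2 : ℝ) - conj z * w : ℂ).re = (‖z - w‖ ^ 2 - ‖w‖ ^ 2) / 2 := by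
    simp only [Complex.sub_re, Complex.ofReal_re, Complex.mul_re, Complex.conj_re, Complex.conj_im,
      Complex.sq_norm, Complex.normSq_apply, Complex.sub_im]
    ring
  rw [norm_mul, Complex.norm_exp, hre, Real.mul_rpow (norm_nonneg a) (Real.exp_nonneg _),
    ← Real.exp_mul, mul_assoc, ← Real.exp_add]
  ring_nf

theorem Complex.norm_mul_exp_rpow_le (a : ℂ) {z w : ℂ} {R : ℝ} (hw : w ∈ closedBall z R) {p : ℝ}
    (hp : 0 ≤ p) :
    ‖a * Complex.exp ((‖z‖ ^ 2 / 2 : ℝ) - conj z * w)‖ ^ p ≤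
      Real.exp (p * R ^ 2 / 2) * (‖a‖ ^ p * Real.exp (-(p * ‖w‖ ^ 2) / 2)) := by
  rw [Complex.norm_mul_exp_rpow, mul_comm (Real.exp _)]
  have hzw : ‖z - w‖ ≤ R := by rwa [mem_closedBall, dist_comm, dist_eq_norm] at hw
  gcongr

/-- local pointwise estimate for the Fock spaces. -/
theorem fock_local_pointwise_estimate (p : ℝ) (hp : 1 ≤ p) :
    ∃ C > (0 : ℝ), ∀ f : ℂ → ℂ, Differentiable ℂ f → ∀ z : ℂ,
      ‖f z‖ ^ p * Real.exp (-(p * ‖z‖ ^ 2) / 2) ≤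
        C * ∫ w in Metric.ball z 1,
          ‖f w‖ ^ p * Real.exp (-(p * ‖w‖ ^ 2) / 2) := by
  have hp₀ : 0 ≤ p := zero_le_one.trans hp
  refine ⟨Real.exp (p / 2) / π, by positivity, fun f hf z ↦ ?_⟩
  set G : ℂ → ℝ := fun w ↦ ‖f w‖ ^ p * Real.exp (-(p * ‖w‖ ^ 2) / 2)
  set F : ℂ → ℂ := fun w ↦ f w * Complex.exp ((‖z‖ ^ 2 / 2 : ℝ) - conj z * w)
  have hF : Differentiable ℂ F := by fun_prop
  have hFz : ‖F z‖ ^ p = G z := by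
    rw [Complex.norm_mul_exp_rpow, sub_self, norm_zero]
    simp [G]
  have hFG : ∀ w ∈ ball z 1, ‖F w‖ ^ p ≤ Real.exp (p / 2) * G w := fun w hw ↦ by
    simpa only [one_pow, mul_one] using
      Complex.norm_mul_exp_rpow_le (f w) (ball_subset_closedBall hw) hp₀
  have hFcont : Continuous fun w ↦ ‖F w‖ ^ p := hF.continuous.norm.rpow_const fun _ ↦ Or.inr hp₀
  have hGcont : Continuous G :=
    (hf.continuous.norm.rpow_const fun _ ↦ Or.inr hp₀).mul (by fun_prop)
  calc G z = ‖F z‖ ^ p := hFz.symm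
    _ ≤ ⨍ w in ball z 1, ‖F w‖ ^ p := hF.diffContOnCl.norm_rpow_le_setAverage_ball one_pos hp
    _ = π⁻¹ * ∫ w in ball z 1, ‖F w‖ ^ p := by
      rw [setAverage_eq, Complex.measureReal_ball z zero_le_one, one_pow, mul_one, smul_eq_mul]
    _ ≤ π⁻¹ * ∫ w in ball z 1, Real.exp (p / 2) * G w := by
      gcongr π⁻¹ * ?_
      exact setIntegral_mono_on hFcont.continuousOn.integrableOn_ball
        (hGcont.const_mul _).continuousOn.integrableOn_ball measurableSet_ball hFG
    _ = Real.exp (p / 2) / π * ∫ w in ball z 1, G w := by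
      rw [integral_const_mul]; ring
end

section
/- Let u : ℂ → ℂ be entire and let a, b ∈ ℂ with |a| = 1. If sup_{z∈ℂ} |u(z)| · exp((|a·z + b|² − |z|²)/2) < ∞, then u(z) = u(0) · exp(−a · conj(b) · z) for all z ∈ ℂ. -/
/-! Write `c = a · conj(b)`. Since `|a| = 1`, expanding the square gives
`|a z + b|² - |z|² = 2 Re(c z) + |b|² ≥ 2 Re(c z)`, so the hypothesis bounds
`|u(z) e^{c z}| = |u(z)| e^{Re(c z)}`. By Liouville the entire function
`u(z) e^{c z}` is constant, equal to its value `u(0)` at the origin. -/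

open Complex ComplexConjugate

theorem Complex.sq_norm_mul_add (a b z : ℂ) :
    ‖a * z + b‖ ^ 2 = ‖a‖ ^ 2 * ‖z‖ ^ 2 + 2 * (a * conj b * z).re + ‖b‖ ^ 2 := by
  simp only [Complex.sq_norm, normSq_add, normSq_mul, mul_right_comm a z]
  ring

theorem Complex.re_mul_conj_mul_le_of_norm_eq_one {a : ℂ} (ha : ‖a‖ = 1) (b z : ℂ) :
    (a * conj b * z).re ≤ (‖a * z + b‖ ^ 2 - ‖z‖ ^ 2) / 2 := by
  rw [sq_norm_mul_add, ha]
  nlinarith [sq_nonneg ‖b‖]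

theorem Differentiable.eq_mul_exp_of_isBounded_mul_exp {u : ℂ → ℂ} (hu : Differentiable ℂ u)
    {c : ℂ} (hbdd : Bornology.IsBounded (Set.range fun z => u z * Complex.exp (c * z))) (z : ℂ) :
    u z = u 0 * Complex.exp (-(c * z)) := by
  have hg : Differentiable ℂ fun z => u z * Complex.exp (c * z) := by fun_prop
  have hconst : u z * Complex.exp (c * z) = u 0 := by
    simpa using hg.apply_eq_apply_of_bounded hbdd z 0
  rw [exp_neg, ← hconst, mul_assoc, mul_inv_cancel₀ (exp_ne_zero _), mul_one]

/-- if `|a| = 1` and `M(u, ψ) < ∞` for `ψ(z) = a z + b`, then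
`u(z) = u(0) · exp(−a · conj(b) · z)`, i.e. `u = u(0) K_{-conj(a) b}`. -/
theorem weight_form_of_bounded_of_abs_eq_one (u : ℂ → ℂ) (hu : Differentiable ℂ u)
    (a b : ℂ) (ha : ‖a‖ = 1)
    (hM : ∃ M : ℝ, ∀ z : ℂ, ‖u z‖ *
        Real.exp ((‖a * z + b‖ ^ 2 - ‖z‖ ^ 2) / 2) ≤ M) :
    ∀ z : ℂ, u z = u 0 * Complex.exp (-(a * (starRingEnd ℂ) b * z)) := by
  obtain ⟨M, hM⟩ := hM
  refine hu.eq_mul_exp_of_isBounded_mul_exp ?_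
  refine isBounded_iff_forall_norm_le.mpr ⟨M, ?_⟩
  rintro _ ⟨z, rfl⟩
  calc ‖u z * exp (a * conj b * z)‖ = ‖u z‖ * Real.exp (a * conj b * z).re := by
        rw [norm_mul, norm_exp]
    _ ≤ ‖u z‖ * Real.exp ((‖a * z + b‖ ^ 2 - ‖z‖ ^ 2) / 2) := by
        gcongr
        exact re_mul_conj_mul_le_of_norm_eq_one ha b z
    _ ≤ M := hM z
end

section
/- Let a ∈ ℂ with |a| < 1. Then for every natural number n ≥ 1, |1 − a^{2n}| · (1 − |a|²) ≤ |1 − a²| · (1 − |a|^{2n}). -/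
open Finset

/- Factor `1 - b ^ n = (1 - b) * ∑_{i<n} b ^ i` and bound the geometric sum termwise by the
real geometric sum in `‖b‖`, which equals `(1 - ‖b‖ ^ n) / (1 - ‖b‖)`; apply this to `b = a ^ 2`. -/

section NormedRing

variable {R : Type*} [NormedRing R] [NormOneClass R]

theorem norm_one_sub_pow_le_mul_geom_sum (b : R) (n : ℕ) :
    ‖1 - b ^ n‖ ≤ ‖1 - b‖ * ∑ i ∈ range n, ‖b‖ ^ i :=
  calc ‖1 - b ^ n‖ = ‖(1 - b) * ∑ i ∈ range n, b ^ i‖ := by rw [mul_neg_geom_sum]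
    _ ≤ ‖1 - b‖ * ‖∑ i ∈ range n, b ^ i‖ := norm_mul_le _ _
    _ ≤ ‖1 - b‖ * ∑ i ∈ range n, ‖b‖ ^ i := by
      gcongr
      exact (norm_sum_le _ _).trans (sum_le_sum fun i _ ↦ norm_pow_le b i)

theorem norm_one_sub_pow_mul_le {b : R} (hb : ‖b‖ ≤ 1) (n : ℕ) :
    ‖1 - b ^ n‖ * (1 - ‖b‖) ≤ ‖1 - b‖ * (1 - ‖b‖ ^ n) :=
  calc ‖1 - b ^ n‖ * (1 - ‖b‖) ≤ (‖1 - b‖ * ∑ i ∈ range n, ‖b‖ ^ i) * (1 - ‖b‖) :=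
        mul_le_mul_of_nonneg_right (norm_one_sub_pow_le_mul_geom_sum b n) (sub_nonneg.2 hb)
    _ = ‖1 - b‖ * (1 - ‖b‖ ^ n) := by rw [mul_assoc, geom_sum_mul_neg]

end NormedRing

theorem abs_one_sub_pow_ineq_general (a : ℂ) (ha : ‖a‖ < 1) (n : ℕ) :
    ‖1 - a ^ (2 * n)‖ * (1 - ‖a‖ ^ 2) ≤
      ‖1 - a ^ 2‖ * (1 - ‖a‖ ^ (2 * n)) := by
  have hsq : ‖a ^ 2‖ ≤ 1 := by rw [norm_pow]; exact pow_le_one₀ (norm_nonneg a) ha.le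
  simpa only [pow_mul, norm_pow] using norm_one_sub_pow_mul_le hsq n

/-- for `|a| < 1` and `n ≥ 1`,
`|1 − a^{2n}|·(1 − |a|²) ≤ |1 − a²|·(1 − |a|^{2n})`. -/
theorem abs_one_sub_pow_ineq (a : ℂ) (ha : ‖a‖ < 1) (n : ℕ) (hn : 1 ≤ n) :
    ‖1 - a ^ (2 * n)‖ * (1 - ‖a‖ ^ 2) ≤
      ‖1 - a ^ 2‖ * (1 - ‖a‖ ^ (2 * n)) :=
  abs_one_sub_pow_ineq_general a ha n
end

section
/- Let a, b, c ∈ ℂ with |a| = 1, let ψ(z) = a·z + b and u(z) = c · exp(−a·conj(b)·z), and set u_n(z) := ∏_{j=0}^{n−1} u(ψ^{[j]}(z)). Then for every natural number n ≥ 1, sup_{z∈ℂ} |u_n(z)| · exp((|ψ^{[n]}(z)|² − |z|²)/2) = (|c| · e^{|b|²/2})^n. Consequently, sup_{n≥1} sup_{z∈ℂ} |u_n(z)| · exp((|ψ^{[n]}(z)|² − |z|²)/2) < ∞ if and only if |c| ≤ e^{−|b|²/2}. -/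
/-! The weight `|u|·e^{(|ψ|² − |z|²)/2}` is a multiplicative cocycle along the orbit of `ψ`, so its
`n`-th iterate is the product of its values at `z, ψ z, …, ψ^{[n-1]} z`. For the affine map with
`|a| = 1` the one-step value is the constant `|c|·e^{|b|²/2}`: expanding `|az + b|²` produces the
cross term `Re(a z conj b)`, which is exactly cancelled by `|exp(−a conj(b) z)|`. Hence the
`n`-step value is the constant `(|c|·e^{|b|²/2})^n`, bounded in `n` iff it is at most `1`. -/

open Finset

theorem norm_mul_exp_telescope_iterate {α : Type*} (ψ : α → α) (u : α → ℂ) (φ : α → ℝ)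
    (K : ℝ) (hK : ∀ z, ‖u z‖ * Real.exp (φ (ψ z) - φ z) = K) (n : ℕ) (z : α) :
    ‖∏ j ∈ range n, u (ψ^[j] z)‖ * Real.exp (φ (ψ^[n] z) - φ z) = K ^ n := by
  induction n with
  | zero => simp
  | succ n ih =>
    have hsplit : φ (ψ^[n + 1] z) - φ z =
        (φ (ψ^[n] z) - φ z) + (φ (ψ (ψ^[n] z)) - φ (ψ^[n] z)) := by
      rw [Function.iterate_succ_apply']; ring
    rw [prod_range_succ, norm_mul, hsplit, Real.exp_add, pow_succ, ← ih, ← hK (ψ^[n] z)]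
    ring

theorem norm_mul_exp_affine {a : ℂ} (ha : ‖a‖ = 1) (b c z : ℂ) :
    ‖c * Complex.exp (-(a * (starRingEnd ℂ) b * z))‖ *
        Real.exp ((‖a * z + b‖ ^ 2 - ‖z‖ ^ 2) / 2) = ‖c‖ * Real.exp (‖b‖ ^ 2 / 2) := by
  have hsq : ‖a * z + b‖ ^ 2 = ‖z‖ ^ 2 + 2 * (a * z * (starRingEnd ℂ) b).re + ‖b‖ ^ 2 := by
    rw [Complex.sq_norm, Complex.sq_norm, Complex.sq_norm, Complex.normSq_add,
      Complex.normSq_mul, Complex.normSq_eq_norm_sq a, ha]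
    ring
  rw [norm_mul, Complex.norm_exp, hsq, mul_assoc, ← Real.exp_add, Complex.neg_re]
  congr 2
  ring_nf

theorem exists_forall_pow_le_iff {K : ℝ} (hK : 0 ≤ K) :
    (∃ M : ℝ, ∀ n : ℕ, 1 ≤ n → K ^ n ≤ M) ↔ K ≤ 1 := by
  constructor
  · rintro ⟨M, hM⟩
    by_contra! hK1
    obtain ⟨n, hn⟩ := pow_unbounded_of_one_lt M hK1
    have hmono : K ^ n ≤ K ^ (n + 1) := pow_le_pow_right₀ hK1.le n.le_succ
    linarith [hM (n + 1) n.succ_pos]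
  · exact fun hK1 => ⟨1, fun n _ => pow_le_one₀ hK hK1⟩

/-- for `ψ(z) = az + b` with `|a| = 1` and `u(z) = c·exp(−a·conj(b)·z)`,
the norm of the `n`-th power `M(u_n, ψ^{[n]})` equals `(|c|·e^{|b|²/2})^n`; consequently the
family is uniformly bounded iff `|c| ≤ e^{−|b|²/2}`. -/
theorem iterate_sup_formula (a b c : ℂ) (ha : ‖a‖ = 1) (ψ u : ℂ → ℂ)
    (hψ : ∀ z : ℂ, ψ z = a * z + b)
    (hu : ∀ z : ℂ, u z = c * Complex.exp (-(a * (starRingEnd ℂ) b * z)))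
    (un : ℕ → ℂ → ℂ)
    (hun : ∀ (n : ℕ) (z : ℂ), un n z = ∏ j ∈ Finset.range n, u (ψ^[j] z)) :
    (∀ n : ℕ, 1 ≤ n →
      (⨆ z : ℂ, ‖un n z‖ *
          Real.exp ((‖ψ^[n] z‖ ^ 2 - ‖z‖ ^ 2) / 2)) =
        (‖c‖ * Real.exp (‖b‖ ^ 2 / 2)) ^ n) ∧
    ((∃ M : ℝ, ∀ n : ℕ, 1 ≤ n → ∀ z : ℂ,
        ‖un n z‖ *
          Real.exp ((‖ψ^[n] z‖ ^ 2 - ‖z‖ ^ 2) / 2) ≤ M) ↔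
      ‖c‖ ≤ Real.exp (-(‖b‖ ^ 2) / 2)) := by
  set K := ‖c‖ * Real.exp (‖b‖ ^ 2 / 2)
  have hstep (z : ℂ) : ‖u z‖ * Real.exp (‖ψ z‖ ^ 2 / 2 - ‖z‖ ^ 2 / 2) = K := by
    rw [hu, hψ, ← sub_div]; exact norm_mul_exp_affine ha b c z
  have hiter (n : ℕ) (z : ℂ) :
      ‖un n z‖ * Real.exp ((‖ψ^[n] z‖ ^ 2 - ‖z‖ ^ 2) / 2) = K ^ n := by
    rw [hun, sub_div]
    exact norm_mul_exp_telescope_iterate ψ u (fun z => ‖z‖ ^ 2 / 2) K hstep n z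
  have hc : ‖c‖ ≤ Real.exp (-(‖b‖ ^ 2) / 2) ↔ K ≤ 1 := by
    rw [neg_div, Real.exp_neg, ← one_div, le_div_iff₀ (Real.exp_pos _)]
  refine ⟨fun n _ => by simp only [hiter, ciSup_const], ?_⟩
  simp only [hiter, forall_const, hc]
  exact exists_forall_pow_le_iff (by positivity)
end

section
/- Let 1 ≤ p < ∞ and let a, b, c ∈ ℂ with |a| = 1; set ψ(z) = a·z + b, u(z) = c · exp(−a·conj(b)·z), and u_n(z) := ∏_{j=0}^{n−1} u(ψ^{[j]}(z)). Then the following are equivalent: (i) there exists C > 0 such that ‖u_n·(f∘ψ^{[n]})‖_p ≤ C·‖f‖_p for every n ∈ ℕ and every entire f : ℂ → ℂ (i.e., W_{(u,ψ)} is power bounded on F_p); (ii) sup_{n∈ℕ} ‖u_n‖_p < ∞; (iii) |c| ≤ e^{−|b|²/2}. -/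
open MeasureTheory

/-- The Fock space norm `‖f‖_p` for `1 ≤ p < ∞`. -/
noncomputable def fockNorm (p : ℝ) (f : ℂ → ℂ) : ℝ :=
  ((p / (2 * Real.pi)) * ∫ z : ℂ, ‖f z‖ ^ p *
    Real.exp (-(p * ‖z‖ ^ 2) / 2)) ^ (1 / p)

/-!
The weight `u` exactly compensates the Gaussian shift caused by `ψ`:
`|u z| e^{-|z|²/2} = L e^{-|ψ z|²/2}` with `L = |c| e^{|b|²/2}`, and `ψ` is a rigid motion of the
plane, hence preserves Lebesgue measure. So `‖u · (f ∘ ψ)‖_p = L ‖f‖_p` for every `f`, and by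
induction `‖u_n · (f ∘ ψ^[n])‖_p = L^n ‖f‖_p`. Taking `f = 1`, whose norm is `1`, gives
`‖u_n‖_p = L^n`; so each of power boundedness and boundedness of `(‖u_n‖_p)` says `L ≤ 1`.
-/

open Real ComplexConjugate

lemma integral_exp_neg_mul_norm_sq_complex {t : ℝ} (ht : 0 < t) :
    ∫ z : ℂ, rexp (-t * ‖z‖ ^ 2) = π / t := by
  rw [GaussianFourier.integral_rexp_neg_mul_sq_norm ht]
  simp

lemma fockNorm_nonneg {p : ℝ} (hp : 0 ≤ p) (f : ℂ → ℂ) : 0 ≤ fockNorm p f := by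
  unfold fockNorm
  have hI : 0 ≤ ∫ z : ℂ, ‖f z‖ ^ p * rexp (-(p * ‖z‖ ^ 2) / 2) :=
    integral_nonneg fun z => by positivity
  exact rpow_nonneg (mul_nonneg (div_nonneg hp (by positivity)) hI) _

lemma fockNorm_eq_integral_rpow (p : ℝ) (f : ℂ → ℂ) :
    fockNorm p f = (p / (2 * π) * ∫ z : ℂ, (‖f z‖ * rexp (-‖z‖ ^ 2 / 2)) ^ p) ^ (1 / p) := by
  unfold fockNorm
  congr 3 with z
  rw [mul_rpow (norm_nonneg _) (exp_pos _).le, ← exp_mul]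
  ring_nf

lemma fockNorm_one {p : ℝ} (hp : 0 < p) : fockNorm p (fun _ => 1) = 1 := by
  rw [fockNorm_eq_integral_rpow p]
  simp_rw [norm_one, one_mul, ← exp_mul]
  have hI : ∫ z : ℂ, rexp (-‖z‖ ^ 2 / 2 * p) = π / (p / 2) := by
    rw [← integral_exp_neg_mul_norm_sq_complex (by positivity)]
    congr with z
    ring_nf
  rw [hI, show p / (2 * π) * (π / (p / 2)) = 1 by field_simp, one_rpow]

lemma integral_comp_mul_add {E : Type*} [NormedAddCommGroup E] [NormedSpace ℝ E] {a : ℂ}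
    (ha : ‖a‖ = 1) (b : ℂ) (F : ℂ → E) : ∫ z, F (a * z + b) = ∫ z, F z := by
  have ha' : a ∈ Metric.sphere (0 : ℂ) 1 := by simpa using ha
  exact (integral_comp (rotation ⟨a, ha'⟩) fun w => F (w + b)).trans
    (integral_add_right_eq_self F b)

lemma norm_mul_add_sq {a : ℂ} (ha : ‖a‖ = 1) (b z : ℂ) :
    ‖a * z + b‖ ^ 2 = ‖z‖ ^ 2 + 2 * (a * conj b * z).re + ‖b‖ ^ 2 := by
  have ha2 : Complex.normSq a = 1 := by rw [← Complex.sq_norm, ha, one_pow]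
  simp only [Complex.sq_norm, Complex.normSq_add, Complex.normSq_mul, ha2, one_mul]
  ring_nf

lemma norm_mul_exp_mul_exp_neg_norm_sq {a : ℂ} (ha : ‖a‖ = 1) (b c z : ℂ) :
    ‖c * Complex.exp (-(a * conj b * z))‖ * rexp (-‖z‖ ^ 2 / 2) =
      ‖c‖ * rexp (‖b‖ ^ 2 / 2) * rexp (-‖a * z + b‖ ^ 2 / 2) := by
  rw [norm_mul, Complex.norm_exp, norm_mul_add_sq ha, mul_assoc, ← exp_add,
    mul_assoc ‖c‖, ← exp_add, Complex.neg_re]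
  ring_nf

lemma fockNorm_eq_mul_of_norm_mul_exp_eq {p L : ℝ} (hp : 0 < p) (hL : 0 ≤ L) {ψ : ℂ → ℂ}
    (hψ : ∀ F : ℂ → ℝ, ∫ z, F (ψ z) = ∫ z, F z) {f g : ℂ → ℂ}
    (hfg : ∀ z, ‖f z‖ * rexp (-‖z‖ ^ 2 / 2) = L * (‖g (ψ z)‖ * rexp (-‖ψ z‖ ^ 2 / 2))) :
    fockNorm p f = L * fockNorm p g := by
  have hI : 0 ≤ ∫ w : ℂ, (‖g w‖ * rexp (-‖w‖ ^ 2 / 2)) ^ p :=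
    integral_nonneg fun w => by positivity
  rw [fockNorm_eq_integral_rpow p, fockNorm_eq_integral_rpow p]
  simp_rw [hfg, mul_rpow hL (mul_nonneg (norm_nonneg _) (exp_pos _).le)]
  rw [integral_const_mul, hψ fun w => (‖g w‖ * rexp (-‖w‖ ^ 2 / 2)) ^ p, mul_left_comm _ (L ^ p),
    mul_rpow (rpow_nonneg hL p) (by positivity), ← rpow_mul hL,
    mul_one_div_cancel hp.ne', rpow_one]

lemma fockNorm_weightedComp {p : ℝ} (hp : 0 < p) {a : ℂ} (ha : ‖a‖ = 1) (b c : ℂ) (g : ℂ → ℂ) :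
    fockNorm p (fun z => c * Complex.exp (-(a * conj b * z)) * g (a * z + b)) =
      ‖c‖ * rexp (‖b‖ ^ 2 / 2) * fockNorm p g :=
  fockNorm_eq_mul_of_norm_mul_exp_eq hp (by positivity) (integral_comp_mul_add ha b) fun z => by
    rw [norm_mul, mul_right_comm, norm_mul_exp_mul_exp_neg_norm_sq ha]
    ring

lemma fockNorm_prod_mul_comp_iterate {p L : ℝ} {u ψ : ℂ → ℂ}
    (hstep : ∀ g, fockNorm p (fun z => u z * g (ψ z)) = L * fockNorm p g) (n : ℕ) (g : ℂ → ℂ) :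
    fockNorm p (fun z => (∏ j ∈ Finset.range n, u (ψ^[j] z)) * g (ψ^[n] z)) =
      L ^ n * fockNorm p g := by
  induction n generalizing g with
  | zero => simp
  | succ n ih =>
    have h := hstep fun w => (∏ j ∈ Finset.range n, u (ψ^[j] w)) * g (ψ^[n] w)
    rw [ih, ← mul_assoc, ← pow_succ'] at h
    convert h using 3 with z
    simp only [Finset.prod_range_succ', Function.iterate_succ_apply, Function.iterate_zero_apply]
    ring

lemma exists_forall_pow_le_iff_s8 {R : Type*} [Semiring R] [LinearOrder R] [IsStrictOrderedRing R]
    [Archimedean R] [ExistsAddOfLE R] {x : R} (hx : 0 ≤ x) :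
    (∃ M, ∀ n : ℕ, x ^ n ≤ M) ↔ x ≤ 1 := by
  refine ⟨fun ⟨M, hM⟩ => ?_, fun hx1 => ⟨1, fun n => pow_le_one₀ hx hx1⟩⟩
  by_contra! hx1
  obtain ⟨n, hn⟩ := pow_unbounded_of_one_lt M hx1
  exact (hM n).not_gt hn

lemma mul_exp_le_one_iff {x y : ℝ} : x * rexp y ≤ 1 ↔ x ≤ rexp (-y) := by
  rw [exp_neg, ← one_div, le_div_iff₀ (exp_pos y)]

/-- Theorem 1.1 for `|a| = 1`: power boundedness of `W_{(u,ψ)}` on `F_p`,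
boundedness of `(‖u_n‖_p)ₙ`, and `|c| ≤ e^{−|b|²/2}` (i.e. `|u(0)| ≤ e^{−|b|²/2}`) are
equivalent. -/
theorem power_bounded_tfae_abs_eq_one (p : ℝ) (hp : 1 ≤ p) (a b c : ℂ)
    (ha : ‖a‖ = 1) (ψ u : ℂ → ℂ)
    (hψ : ∀ z : ℂ, ψ z = a * z + b)
    (hu : ∀ z : ℂ, u z = c * Complex.exp (-(a * (starRingEnd ℂ) b * z)))
    (un : ℕ → ℂ → ℂ)
    (hun : ∀ (n : ℕ) (z : ℂ), un n z = ∏ j ∈ Finset.range n, u (ψ^[j] z)) :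
    ((∃ C > (0 : ℝ), ∀ (n : ℕ) (f : ℂ → ℂ), Differentiable ℂ f →
        fockNorm p (fun z => un n z * f (ψ^[n] z)) ≤ C * fockNorm p f) ↔
      ‖c‖ ≤ Real.exp (-(‖b‖ ^ 2) / 2)) ∧
    ((∃ M : ℝ, ∀ n : ℕ, fockNorm p (un n) ≤ M) ↔
      ‖c‖ ≤ Real.exp (-(‖b‖ ^ 2) / 2)) := by
  have hp0 : 0 < p := by linarith
  set L := ‖c‖ * rexp (‖b‖ ^ 2 / 2)
  have hL : 0 ≤ L := by positivity
  have hW (n : ℕ) (g : ℂ → ℂ) :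
      fockNorm p (fun z => un n z * g (ψ^[n] z)) = L ^ n * fockNorm p g := by
    simp only [hun]
    refine fockNorm_prod_mul_comp_iterate (fun g => ?_) n g
    simp only [hu, hψ]
    exact fockNorm_weightedComp hp0 ha b c g
  have hun_norm (n : ℕ) : fockNorm p (un n) = L ^ n := by
    simpa [fockNorm_one hp0] using hW n fun _ => 1
  have hcond : ‖c‖ ≤ rexp (-(‖b‖ ^ 2) / 2) ↔ L ≤ 1 := by rw [neg_div, mul_exp_le_one_iff]
  rw [hcond]
  refine ⟨⟨fun ⟨C, _, hC⟩ => (exists_forall_pow_le_iff_s8 hL).1 ⟨C, fun n => ?_⟩,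
    fun hL1 => ⟨1, one_pos, fun n f _ => ?_⟩⟩, ?_⟩
  · have h := hC n (fun _ => 1) (differentiable_const 1)
    simp only [mul_one, fockNorm_one hp0] at h
    exact hun_norm n ▸ h
  · rw [hW, one_mul]
    exact mul_le_of_le_one_left (fockNorm_nonneg hp0.le f) (pow_le_one₀ hL hL1)
  · simp_rw [hun_norm]
    exact exists_forall_pow_le_iff_s8 hL
end

section
/- Let a, b ∈ ℂ with |a| < 1, set ψ(z) = a·z + b and z₀ = b/(1−a). Let a₀, a₁, a₂ ∈ ℂ with |a₂| < (1 − |a|²)/2, and let u(z) = exp(a₀ + a₁·z + a₂·z²) and u_n(z) := ∏_{j=0}^{n−1} u(ψ^{[j]}(z)). Then sup_{n≥1} sup_{z∈ℂ} |u_n(z)| · exp((|ψ^{[n]}(z)|² − |z|²)/2) < ∞ if and only if |u(z₀)| ≤ 1. -/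
/-!
Writing `ψ z = z₀ + a (z - z₀)`, the quantity `‖u_n z‖ e^{(‖ψ^[n] z‖² - ‖z‖²)/2}` is the product
of the one-step weights `‖u w‖ e^{(‖ψ w‖² - ‖w‖²)/2}` along the orbit `w = ψ^[j] z`, since the
Gaussian factors telescope. At the fixed point the product is `‖u z₀‖ ^ n`, which forces
`‖u z₀‖ ≤ 1`. Conversely, at `w = z₀ + v` the one-step weight is at most
`‖u z₀‖ e^{c ‖v‖ - δ ‖v‖²}` for a constant `c`, with `δ = (1 - ‖a‖²)/2 - ‖a₂‖ > 0`. Along the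
orbit `‖v‖` decays geometrically, so the exponents sum to at most
`c ‖z - z₀‖ / (1 - ‖a‖) - δ ‖z - z₀‖²`, a concave quadratic in `‖z - z₀‖`, hence bounded.
-/

open Finset

/-- The pointwise quantity whose supremum over `z` is `M(u, ψ)`. -/
noncomputable def fockWeight (u ψ : ℂ → ℂ) (z : ℂ) : ℝ :=
  ‖u z‖ * Real.exp ((‖ψ z‖ ^ 2 - ‖z‖ ^ 2) / 2)

theorem fockWeight_nonneg (u ψ : ℂ → ℂ) (z : ℂ) : 0 ≤ fockWeight u ψ z := by
  unfold fockWeight; positivity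

theorem fockWeight_iterate_eq_prod (u ψ : ℂ → ℂ) (n : ℕ) (z : ℂ) :
    fockWeight (fun z ↦ ∏ j ∈ range n, u (ψ^[j] z)) ψ^[n] z =
      ∏ j ∈ range n, fockWeight u ψ (ψ^[j] z) := by
  have htelescope : ∑ j ∈ range n, (‖ψ^[j + 1] z‖ ^ 2 - ‖ψ^[j] z‖ ^ 2) / 2 =
      (‖ψ^[n] z‖ ^ 2 - ‖z‖ ^ 2) / 2 := by
    rw [← sum_div, sum_range_sub (fun j ↦ ‖ψ^[j] z‖ ^ 2)]
    rfl
  simp only [fockWeight, norm_prod, ← htelescope, Real.exp_sum, ← prod_mul_distrib,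
    Function.iterate_succ_apply']

theorem iterate_eq_add_pow_mul_sub {R : Type*} [CommRing R] {ψ : R → R} {a z₀ : R}
    (hψ : ∀ z, ψ z = z₀ + a * (z - z₀)) (n : ℕ) (z : R) :
    ψ^[n] z = z₀ + a ^ n * (z - z₀) := by
  induction n with
  | zero => simp
  | succ n ih => rw [Function.iterate_succ_apply', ih, hψ]; ring

theorem le_one_of_forall_pow_le {x M : ℝ} (h : ∀ n : ℕ, 1 ≤ n → x ^ n ≤ M) : x ≤ 1 := by
  by_contra! hx
  obtain ⟨n, hn⟩ := pow_unbounded_of_one_lt M hx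
  have := h (n + 1) n.succ_pos
  have := pow_le_pow_right₀ hx.le (n.le_add_right 1)
  linarith

theorem norm_exp_quadratic_add_le (a₀ a₁ a₂ z₀ v : ℂ) :
    ‖Complex.exp (a₀ + a₁ * (z₀ + v) + a₂ * (z₀ + v) ^ 2)‖ ≤
      ‖Complex.exp (a₀ + a₁ * z₀ + a₂ * z₀ ^ 2)‖ *
        Real.exp (‖a₁ + 2 * a₂ * z₀‖ * ‖v‖ + ‖a₂‖ * ‖v‖ ^ 2) := by
  have hexpand : a₀ + a₁ * (z₀ + v) + a₂ * (z₀ + v) ^ 2 =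
      (a₀ + a₁ * z₀ + a₂ * z₀ ^ 2) + ((a₁ + 2 * a₂ * z₀) * v + a₂ * v ^ 2) := by ring
  rw [hexpand, Complex.exp_add, norm_mul]
  gcongr
  refine (Complex.norm_exp_le_exp_norm _).trans (Real.exp_le_exp.2 ?_)
  refine (norm_add_le _ _).trans_eq ?_
  rw [norm_mul, norm_mul, norm_pow]

theorem sq_norm_add_mul_sub_sq_norm_add_le (z₀ a v : ℂ) :
    ‖z₀ + a * v‖ ^ 2 - ‖z₀ + v‖ ^ 2 ≤
      2 * (‖z₀‖ * ‖a - 1‖) * ‖v‖ - (1 - ‖a‖ ^ 2) * ‖v‖ ^ 2 := by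
  have hinner : inner ℝ z₀ (a * v) - inner ℝ z₀ v ≤ ‖z₀‖ * ‖a - 1‖ * ‖v‖ := by
    rw [← inner_sub_right, ← sub_one_mul, mul_assoc, ← norm_mul]
    exact real_inner_le_norm _ _
  rw [norm_add_sq_real, norm_add_sq_real, norm_mul]
  linarith

theorem mul_sub_mul_sq_le {K δ : ℝ} (hδ : 0 < δ) (R : ℝ) :
    K * R - δ * R ^ 2 ≤ K ^ 2 / (4 * δ) := by
  rw [le_div_iff₀ (by positivity)]
  nlinarith [sq_nonneg (K - 2 * δ * R)]

theorem sum_geom_mul_sub_le {r c δ R : ℝ} (hr₀ : 0 ≤ r) (hr₁ : r < 1) (hc : 0 ≤ c) (hδ : 0 ≤ δ)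
    (hR : 0 ≤ R) {n : ℕ} (hn : 1 ≤ n) :
    ∑ j ∈ range n, (c * (r ^ j * R) - δ * (r ^ j * R) ^ 2) ≤ c / (1 - r) * R - δ * R ^ 2 := by
  have hlinear : ∑ j ∈ range n, r ^ j ≤ 1 / (1 - r) := by
    simpa using geom_sum_Ico_le_of_lt_one (m := 0) (n := n) hr₀ hr₁
  have hquadratic : R ^ 2 ≤ ∑ j ∈ range n, (r ^ j * R) ^ 2 := by
    simpa using single_le_sum (fun j _ ↦ sq_nonneg (r ^ j * R)) (mem_range.2 hn)
  calc ∑ j ∈ range n, (c * (r ^ j * R) - δ * (r ^ j * R) ^ 2)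
      = c * R * ∑ j ∈ range n, r ^ j - δ * ∑ j ∈ range n, (r ^ j * R) ^ 2 := by
        rw [sum_sub_distrib, ← mul_sum, ← mul_sum, ← sum_mul]; ring
    _ ≤ c * R * (1 / (1 - r)) - δ * R ^ 2 := by gcongr
    _ = c / (1 - r) * R - δ * R ^ 2 := by ring

section AffineSymbol

variable {a z₀ a₀ a₁ a₂ : ℂ} {ψ u : ℂ → ℂ}

theorem fockWeight_add_le (hψ : ∀ z, ψ z = z₀ + a * (z - z₀))
    (hu : ∀ z, u z = Complex.exp (a₀ + a₁ * z + a₂ * z ^ 2)) (v : ℂ) :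
    fockWeight u ψ (z₀ + v) ≤ ‖u z₀‖ * Real.exp
      ((‖a₁ + 2 * a₂ * z₀‖ + ‖z₀‖ * ‖a - 1‖) * ‖v‖ - ((1 - ‖a‖ ^ 2) / 2 - ‖a₂‖) * ‖v‖ ^ 2) := by
  have hgauss := sq_norm_add_mul_sub_sq_norm_add_le z₀ a v
  rw [fockWeight, hψ, add_sub_cancel_left, hu, hu]
  calc _ ≤ ‖Complex.exp (a₀ + a₁ * z₀ + a₂ * z₀ ^ 2)‖ *
          Real.exp (‖a₁ + 2 * a₂ * z₀‖ * ‖v‖ + ‖a₂‖ * ‖v‖ ^ 2) *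
          Real.exp ((‖z₀ + a * v‖ ^ 2 - ‖z₀ + v‖ ^ 2) / 2) := by
        gcongr; exact norm_exp_quadratic_add_le ..
    _ = ‖Complex.exp (a₀ + a₁ * z₀ + a₂ * z₀ ^ 2)‖ *
          Real.exp (‖a₁ + 2 * a₂ * z₀‖ * ‖v‖ + ‖a₂‖ * ‖v‖ ^ 2 +
            (‖z₀ + a * v‖ ^ 2 - ‖z₀ + v‖ ^ 2) / 2) := by
        rw [mul_assoc, ← Real.exp_add]
    _ ≤ _ := by gcongr; linarith

theorem prod_fockWeight_iterate_le (ha : ‖a‖ < 1) (ha₂ : ‖a₂‖ < (1 - ‖a‖ ^ 2) / 2)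
    (hψ : ∀ z, ψ z = z₀ + a * (z - z₀))
    (hu : ∀ z, u z = Complex.exp (a₀ + a₁ * z + a₂ * z ^ 2)) (hu₀ : ‖u z₀‖ ≤ 1)
    {n : ℕ} (hn : 1 ≤ n) (z : ℂ) :
    ∏ j ∈ range n, fockWeight u ψ (ψ^[j] z) ≤
      Real.exp (((‖a₁ + 2 * a₂ * z₀‖ + ‖z₀‖ * ‖a - 1‖) / (1 - ‖a‖)) ^ 2 /
        (4 * ((1 - ‖a‖ ^ 2) / 2 - ‖a₂‖))) := by
  set c := ‖a₁ + 2 * a₂ * z₀‖ + ‖z₀‖ * ‖a - 1‖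
  set δ := (1 - ‖a‖ ^ 2) / 2 - ‖a₂‖
  have hδ : 0 < δ := sub_pos.2 ha₂
  have hstep (j : ℕ) : fockWeight u ψ (ψ^[j] z) ≤
      Real.exp (c * (‖a‖ ^ j * ‖z - z₀‖) - δ * (‖a‖ ^ j * ‖z - z₀‖) ^ 2) := by
    have := fockWeight_add_le hψ hu (a ^ j * (z - z₀))
    rw [← iterate_eq_add_pow_mul_sub hψ, norm_mul, norm_pow] at this
    exact this.trans (mul_le_of_le_one_left (Real.exp_pos _).le hu₀)
  calc ∏ j ∈ range n, fockWeight u ψ (ψ^[j] z)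
      ≤ ∏ j ∈ range n, Real.exp (c * (‖a‖ ^ j * ‖z - z₀‖) - δ * (‖a‖ ^ j * ‖z - z₀‖) ^ 2) :=
        prod_le_prod (fun j _ ↦ fockWeight_nonneg ..) (fun j _ ↦ hstep j)
    _ = Real.exp (∑ j ∈ range n, (c * (‖a‖ ^ j * ‖z - z₀‖) - δ * (‖a‖ ^ j * ‖z - z₀‖) ^ 2)) :=
        (Real.exp_sum _ _).symm
    _ ≤ Real.exp (c / (1 - ‖a‖) * ‖z - z₀‖ - δ * ‖z - z₀‖ ^ 2) :=
        Real.exp_le_exp.2 <|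
          sum_geom_mul_sub_le (norm_nonneg a) ha (by positivity) hδ.le (norm_nonneg _) hn
    _ ≤ _ := Real.exp_le_exp.2 (mul_sub_mul_sq_le hδ _)

end AffineSymbol

/-- for compact `W_{(u,ψ)}` with `|a| < 1`, the quantities
`M(u_n, ψ^{[n]})` are uniformly bounded in `n ≥ 1` iff `|u(b/(1−a))| ≤ 1`. -/
theorem sup_iterate_bounded_iff (a b : ℂ) (ha : ‖a‖ < 1)
    (ψ : ℂ → ℂ) (hψ : ∀ z : ℂ, ψ z = a * z + b) (z₀ : ℂ) (hz₀ : z₀ = b / (1 - a))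
    (a₀ a₁ a₂ : ℂ) (ha₂ : ‖a₂‖ < (1 - ‖a‖ ^ 2) / 2) (u : ℂ → ℂ)
    (hu : ∀ z : ℂ, u z = Complex.exp (a₀ + a₁ * z + a₂ * z ^ 2))
    (un : ℕ → ℂ → ℂ)
    (hun : ∀ (n : ℕ) (z : ℂ), un n z = ∏ j ∈ Finset.range n, u (ψ^[j] z)) :
    (∃ M : ℝ, ∀ n : ℕ, 1 ≤ n → ∀ z : ℂ,
        ‖un n z‖ *
          Real.exp ((‖ψ^[n] z‖ ^ 2 - ‖z‖ ^ 2) / 2) ≤ M) ↔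
      ‖u z₀‖ ≤ 1 := by
  have ha₁ : 1 - a ≠ 0 := sub_ne_zero.2 fun h ↦ by simp [← h] at ha
  have hψ₀ (z : ℂ) : ψ z = z₀ + a * (z - z₀) := by rw [hψ, hz₀]; field_simp; ring
  have hweight (n : ℕ) (z : ℂ) : ‖un n z‖ * Real.exp ((‖ψ^[n] z‖ ^ 2 - ‖z‖ ^ 2) / 2) =
      ∏ j ∈ range n, fockWeight u ψ (ψ^[j] z) := by
    rw [hun, ← fockWeight_iterate_eq_prod]; rfl
  simp only [hweight]
  constructor
  · rintro ⟨M, hM⟩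
    refine le_one_of_forall_pow_le (M := M) fun n hn ↦ ?_
    have hfix (j : ℕ) : ψ^[j] z₀ = z₀ := by simp [iterate_eq_add_pow_mul_sub hψ₀]
    simpa [hfix, fockWeight, hψ₀] using hM n hn z₀
  · exact fun hu₀ ↦ ⟨_, fun n hn z ↦ prod_fockWeight_iterate_le ha ha₂ hψ₀ hu hu₀ hn z⟩
end

section
/- Let a, b ∈ ℂ with |a| < 1, set z₀ = b/(1−a), and let u, f : ℂ → ℂ be entire with f not identically zero. Suppose λ ∈ ℂ, λ ≠ 0, and u(z) · f(a·z + b) = λ · f(z) for every z ∈ ℂ. Then there exists m ∈ ℕ such that λ = a^m · u(z₀). -/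
open Filter Topology

/-!
Near the fixed point `z₀` write `f z = (z - z₀)^m g z` with `g z₀ ≠ 0`, where `m` is the (finite)
order of vanishing of `f` at `z₀`. Since `ψ z - z₀ = a (z - z₀)`, the eigenvalue equation becomes
`(z - z₀)^m u z a^m g (ψ z) = (z - z₀)^m λ g z` near `z₀`; cancelling `(z - z₀)^m` off `z₀` and
letting `z → z₀` gives `u z₀ a^m g z₀ = λ g z₀`.
-/

theorem Differentiable.analyticOrderAt_ne_top {E : Type*} [NormedAddCommGroup E]
    [NormedSpace ℂ E] [CompleteSpace E] {f : ℂ → E} (hf : Differentiable ℂ f) (hfne : f ≠ 0)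
    (z₀ : ℂ) : analyticOrderAt f z₀ ≠ ⊤ := by
  rw [Ne, analyticOrderAt_eq_top]
  refine fun hzero ↦ hfne (funext fun z ↦ ?_)
  have hana := Complex.analyticOnNhd_univ_iff_differentiable.mpr hf
  exact hana.eqOn_zero_of_preconnected_of_eventuallyEq_zero isPreconnected_univ
    (Set.mem_univ z₀) hzero (Set.mem_univ z)

section

variable {𝕜 : Type*} [NontriviallyNormedField 𝕜]

theorem eq_of_eventually_pow_sub_mul_eq {F G : 𝕜 → 𝕜} {z₀ : 𝕜} {m : ℕ}
    (hF : ContinuousAt F z₀) (hG : ContinuousAt G z₀)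
    (h : ∀ᶠ z in 𝓝 z₀, (z - z₀) ^ m * F z = (z - z₀) ^ m * G z) : F z₀ = G z₀ := by
  have hne : F =ᶠ[𝓝[≠] z₀] G := by
    filter_upwards [nhdsWithin_le_nhds h, self_mem_nhdsWithin] with z hz hzne
    exact mul_left_cancel₀ (pow_ne_zero m (sub_ne_zero.mpr hzne)) hz
  exact ((hF.eventuallyEq_nhds_iff_eventuallyEq_nhdsNE hG).mp hne).eq_of_nhds

theorem comp_affine_eventuallyEq_pow_sub_smul {E : Type*} [AddCommGroup E] [Module 𝕜 E]
    {f g : 𝕜 → E} {a b z₀ : 𝕜} {m : ℕ} (hfix : a * z₀ + b = z₀)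
    (hfg : f =ᶠ[𝓝 z₀] fun z ↦ (z - z₀) ^ m • g z) :
    (fun z ↦ f (a * z + b)) =ᶠ[𝓝 z₀] fun z ↦ (z - z₀) ^ m • a ^ m • g (a * z + b) := by
  have hψ : Tendsto (fun z ↦ a * z + b) (𝓝 z₀) (𝓝 z₀) := by
    simpa only [hfix] using (show Continuous fun z ↦ a * z + b by fun_prop).tendsto z₀
  filter_upwards [hψ.eventually hfg] with z hz
  rw [hz, smul_smul, ← mul_pow]
  congr 2
  linear_combination hfix

end

theorem eigenvalue_form_general (a b : ℂ) (ha : ‖a‖ < 1) (z₀ : ℂ)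
    (hz₀ : z₀ = b / (1 - a)) (u f : ℂ → ℂ) (hu : Differentiable ℂ u)
    (hf : Differentiable ℂ f) (hfne : f ≠ 0) (lam : ℂ)
    (heig : ∀ z : ℂ, u z * f (a * z + b) = lam * f z) :
    ∃ m : ℕ, lam = a ^ m * u z₀ := by
  have ha1 : 1 - a ≠ 0 := sub_ne_zero.mpr fun h ↦ by simp [← h] at ha
  have hfix : a * z₀ + b = z₀ := by
    rw [hz₀]
    field_simp
    ring
  obtain ⟨g, hg, hgz₀, hfg⟩ :=
    (hf.analyticAt z₀).analyticOrderAt_ne_top.mp (hf.analyticOrderAt_ne_top hfne z₀)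
  set m := analyticOrderNatAt f z₀
  have hfactored : ∀ᶠ z in 𝓝 z₀,
      (z - z₀) ^ m * (u z * a ^ m * g (a * z + b)) = (z - z₀) ^ m * (lam * g z) := by
    filter_upwards [hfg, comp_affine_eventuallyEq_pow_sub_smul hfix hfg] with z hfz hfψ
    have := heig z
    simp only [hfz, hfψ, smul_eq_mul] at this
    linear_combination this
  have hgψ : ContinuousAt (fun z ↦ g (a * z + b)) z₀ :=
    hg.continuousAt.comp_of_eq (by fun_prop) hfix
  have hlimit := eq_of_eventually_pow_sub_mul_eq (F := fun z ↦ u z * a ^ m * g (a * z + b))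
    (G := fun z ↦ lam * g z)
    ((hu.continuous.continuousAt.mul continuousAt_const).mul hgψ)
    (continuousAt_const.mul hg.continuousAt) hfactored
  rw [hfix] at hlimit
  exact ⟨m, mul_right_cancel₀ hgz₀ (by linear_combination -hlimit)⟩

/-- every nonzero eigenvalue of the weighted composition operator
`f ↦ u·(f ∘ ψ)` with `ψ(z) = az + b`, `|a| < 1`, has the form `a^m · u(z₀)` where
`z₀ = b/(1−a)` is the fixed point of `ψ`. -/
theorem eigenvalue_form (a b : ℂ) (ha : ‖a‖ < 1) (z₀ : ℂ)
    (hz₀ : z₀ = b / (1 - a)) (u f : ℂ → ℂ) (hu : Differentiable ℂ u)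
    (hf : Differentiable ℂ f) (hfne : f ≠ 0) (lam : ℂ) (hlam : lam ≠ 0)
    (heig : ∀ z : ℂ, u z * f (a * z + b) = lam * f z) :
    ∃ m : ℕ, lam = a ^ m * u z₀ :=
  eigenvalue_form_general a b ha z₀ hz₀ u f hu hf hfne lam heig
end

section
/- Let a ∈ ℂ with 0 < |a| < 1, let u : ℂ → ℂ be entire with u(0) ≠ 0, and let n ≥ 1 be a natural number. Then there is no entire function f : ℂ → ℂ such that u(z) · f(a·z) − a^n · u(0) · f(z) = z^n for every z ∈ ℂ. -/
/-!
Write `f(z) = z^m g(z)` near `0` with `g(0) ≠ 0`. Then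
`u(z) f(az) - c f(z) = z^m (a^m u(z) g(az) - c g(z))`, so the left side vanishes at `0` to order
exactly `m` when `c ≠ a^m u(0)` and to order greater than `m` when `c = a^m u(0)`. For
`c = a^n u(0)` with `0 < |a| < 1`, the second case is `m = n`, so the order is never `n`,
which is the order of `z^n`.
-/

open Filter Topology

variable {𝕜 E : Type*} [NontriviallyNormedField 𝕜] [NormedAddCommGroup E] [NormedSpace 𝕜 E]

lemma pow_right_injective_of_norm {K : Type*} [NormedDivisionRing K] {a : K}
    (ha₀ : 0 < ‖a‖) (ha₁ : ‖a‖ ≠ 1) : Function.Injective (a ^ · : ℕ → K) :=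
  fun m n h ↦ pow_right_injective₀ ha₀ ha₁ (by simpa only [norm_pow] using congrArg norm h)

lemma analyticOrderAt_pow_smul {φ : 𝕜 → E} {z₀ : 𝕜} (hφ : AnalyticAt 𝕜 φ z₀) (m : ℕ) :
    analyticOrderAt (fun z ↦ (z - z₀) ^ m • φ z) z₀ = m + analyticOrderAt φ z₀ := by
  rw [← analyticOrderAt_centeredMonomial (z₀ := z₀) (n := m),
    ← analyticOrderAt_smul (by fun_prop) hφ]
  rfl

/-- The weighted composition operator `W_{(u,ψ)}` for the dilation `ψ z = a * z`. -/
def weightedDilation (u : 𝕜 → 𝕜) (a : 𝕜) (f : 𝕜 → E) : 𝕜 → E :=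
  fun z ↦ u z • f (a * z)

section weightedDilation

variable {u : 𝕜 → 𝕜} {a c : 𝕜} {f : 𝕜 → E}

lemma weightedDilation_sub_smul_eventuallyEq {g : 𝕜 → E} {m : ℕ}
    (hfg : ∀ᶠ z in 𝓝 0, f z = z ^ m • g z) :
    ∀ᶠ z in 𝓝 0, (weightedDilation u a f - c • f) z
      = z ^ m • (a ^ m • u z • g (a * z) - c • g z) := by
  have hfga : ∀ᶠ z in 𝓝 0, f (a * z) = (a * z) ^ m • g (a * z) :=
    (continuous_const_mul a).tendsto' 0 0 (mul_zero a) |>.eventually hfg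
  filter_upwards [hfg, hfga] with z hz haz
  simp only [weightedDilation, Pi.sub_apply, Pi.smul_apply, hz, haz, mul_pow, smul_sub,
    mul_smul, smul_comm (u z), smul_comm c]
  rw [smul_comm (a ^ m)]

lemma analyticOrderAt_weightedDilation_sub_smul_eq_top (hf : analyticOrderAt f 0 = ⊤) :
    analyticOrderAt (weightedDilation u a f - c • f) 0 = ⊤ := by
  rw [analyticOrderAt_eq_top]
  filter_upwards [weightedDilation_sub_smul_eventuallyEq (u := u) (a := a) (c := c) (m := 0)
    (by simpa using analyticOrderAt_eq_top.mp hf)] with z hz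
  simpa using hz

lemma exists_analyticOrderAt_weightedDilation_sub_smul_eq_add (hu : AnalyticAt 𝕜 u 0)
    (hf : AnalyticAt 𝕜 f 0) {m : ℕ} (hm : analyticOrderAt f 0 = m) :
    ∃ φ : 𝕜 → E, AnalyticAt 𝕜 φ 0 ∧ (φ 0 = 0 ↔ a ^ m * u 0 = c) ∧
      analyticOrderAt (weightedDilation u a f - c • f) 0 = m + analyticOrderAt φ 0 := by
  obtain ⟨g, hg, hg0, hfg⟩ := hf.analyticOrderAt_eq_natCast.mp hm
  simp only [sub_zero] at hfg
  have hga : AnalyticAt 𝕜 (fun z ↦ g (a * z)) 0 := by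
    apply AnalyticAt.comp _ (by fun_prop)
    simpa using hg
  have hφ : AnalyticAt 𝕜 (fun z ↦ a ^ m • u z • g (a * z) - c • g z) 0 :=
    (analyticAt_const.smul (hu.smul hga)).sub (analyticAt_const.smul hg)
  refine ⟨_, hφ, ?_, ?_⟩
  · simp [← mul_smul, ← sub_smul, hg0, sub_eq_zero]
  · rw [analyticOrderAt_congr (weightedDilation_sub_smul_eventuallyEq hfg),
      ← analyticOrderAt_pow_smul hφ]
    simp only [sub_zero]

end weightedDilation

theorem monomial_not_in_range_general (a : ℂ) (ha0 : 0 < ‖a‖)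
    (ha1 : ‖a‖ < 1) (u : ℂ → ℂ) (hu : Differentiable ℂ u) (hu0 : u 0 ≠ 0)
    (n : ℕ) :
    ¬ ∃ f : ℂ → ℂ, Differentiable ℂ f ∧
        ∀ z : ℂ, u z * f (a * z) - a ^ n * u 0 * f z = z ^ n := by
  rintro ⟨f, hf, heq⟩
  have horder : analyticOrderAt (weightedDilation u a f - (a ^ n * u 0) • f) 0 = n := by
    have hT : weightedDilation u a f - (a ^ n * u 0) • f = (· - 0) ^ n := by
      funext z
      simp [weightedDilation, heq]
    rw [hT, analyticOrderAt_centeredMonomial]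
  cases hm : analyticOrderAt f 0 with
  | top => simp [analyticOrderAt_weightedDilation_sub_smul_eq_top hm] at horder
  | coe m =>
    obtain ⟨φ, hφ, hφ0, hord⟩ := exists_analyticOrderAt_weightedDilation_sub_smul_eq_add
      (a := a) (c := a ^ n * u 0) (hu.analyticAt 0) (hf.analyticAt 0) hm
    have hmn : m = n ↔ analyticOrderAt φ 0 ≠ 0 := by
      rw [analyticOrderAt_ne_zero, hφ0, mul_left_inj' hu0,
        (pow_right_injective_of_norm ha0 ha1.ne).eq_iff]
      exact (and_iff_right hφ).symm
    rw [horder] at hord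
    rcases eq_or_ne (analyticOrderAt φ 0) 0 with h0 | h0
    · rw [h0, add_zero, Nat.cast_inj] at hord
      exact hmn.mp hord.symm h0
    · rw [hmn.mpr h0] at hord
      exact h0 (WithTop.add_left_cancel (ENat.natCast_ne_top n) (hord.symm.trans (add_zero _).symm))

/-- for `0 < |a| < 1` and `u` entire with `u(0) ≠ 0`, the monomial `z^n`
(`n ≥ 1`) is not in the range of `W_{(u,ψ)} − a^n·u(0)·I` where `ψ(z) = a·z`. -/
theorem monomial_not_in_range (a : ℂ) (ha0 : 0 < ‖a‖)
    (ha1 : ‖a‖ < 1) (u : ℂ → ℂ) (hu : Differentiable ℂ u) (hu0 : u 0 ≠ 0)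
    (n : ℕ) (hn : 1 ≤ n) :
    ¬ ∃ f : ℂ → ℂ, Differentiable ℂ f ∧
        ∀ z : ℂ, u z * f (a * z) - a ^ n * u 0 * f z = z ^ n :=
  monomial_not_in_range_general a ha0 ha1 u hu hu0 n
end

section
/- Let 1 ≤ p < ∞ and let a ∈ ℂ with |a| = 1 and a^m ≠ 1 for every natural number m ≥ 1 (a is not a root of unity). Then for every entire f : ℂ → ℂ with ‖f‖_p < ∞, lim_{n→∞} ‖(1/n) · Σ_{k=1}^{n} f(a^k · ·) − f(0)‖_p = 0, where f(a^k··) denotes the function z ↦ f(a^k·z) and f(0) denotes the constant function with value f(0). -/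
/-!
Expanding the entire function `f` in its Taylor series, the Cesàro means of `f (a ^ k * z)` are
`∑ⱼ cⱼ zʲ · (1/n) ∑ₖ (aʲ)ᵏ`; since `aʲ ≠ 1` for `j ≥ 1`, every term but the constant one tends to
`0`, and dominated convergence gives pointwise convergence to `f 0`. The Gaussian weight makes
`F_p` an `Lᵖ` space of a finite, rotation-invariant measure. The rotated functions `f (a ^ k * ·)`
are therefore identically distributed, hence uniformly integrable, and so are their Cesàro means;
Vitali's convergence theorem upgrades the pointwise convergence to convergence in `Lᵖ`.
-/

open MeasureTheory

open Filter Topology ProbabilityTheory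
open scoped ENNReal

noncomputable def cesaroMean {E : Type*} [AddCommMonoid E] [Module ℂ E] (w : ℕ → E) (n : ℕ) :
    E :=
  (1 / (n : ℂ)) • ∑ k ∈ Finset.Icc 1 n, w k

section CesaroMean

variable {E : Type*}

theorem cesaroMean_apply {α : Type*} [AddCommMonoid E] [Module ℂ E] (w : ℕ → α → E) (n : ℕ)
    (x : α) : cesaroMean w n x = cesaroMean (fun k => w k x) n := by
  simp only [cesaroMean, Pi.smul_apply, Finset.sum_apply]

theorem cesaroMean_const [AddCommGroup E] [Module ℂ E] (c : E) {n : ℕ} (hn : n ≠ 0) :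
    cesaroMean (fun _ => c) n = c := by
  simp [cesaroMean, Finset.sum_const, Nat.card_Icc, ← Nat.cast_smul_eq_nsmul ℂ, smul_smul, hn]

theorem norm_one_div_natCast_mul_le_one (n : ℕ) : ‖(1 / (n : ℂ))‖ * n ≤ 1 := by
  rcases eq_or_ne n 0 with rfl | hn
  · simp
  · simp [hn]

theorem enorm_one_div_natCast_mul_le_one (n : ℕ) : ‖(1 / (n : ℂ))‖ₑ * n ≤ 1 := by
  rcases eq_or_ne n 0 with rfl | hn
  · simp
  · rw [one_div, enorm_inv (by simpa using hn), show ‖(n : ℂ)‖ₑ = n by simp [enorm]]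
    exact (ENNReal.inv_mul_cancel (by simpa using hn) (by simp)).le

theorem norm_cesaroMean_le [SeminormedAddCommGroup E] [NormedSpace ℂ E] {w : ℕ → E} {M : ℝ}
    (hM : 0 ≤ M) {n : ℕ} (h : ∀ k ∈ Finset.Icc 1 n, ‖w k‖ ≤ M) : ‖cesaroMean w n‖ ≤ M := by
  have hsum : ‖∑ k ∈ Finset.Icc 1 n, w k‖ ≤ n * M := by
    simpa using norm_sum_le_of_le _ h
  calc ‖cesaroMean w n‖ ≤ ‖(1 / (n : ℂ))‖ * (n * M) := by
        rw [cesaroMean, norm_smul]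
        gcongr
    _ ≤ M := by
        rw [← mul_assoc]
        exact mul_le_of_le_one_left hM (norm_one_div_natCast_mul_le_one n)

theorem tendsto_cesaroMean_pow {x : ℂ} (hx : ‖x‖ ≤ 1) :
    Tendsto (cesaroMean (x ^ ·)) atTop (𝓝 (if x = 1 then 1 else 0)) := by
  split_ifs with h1
  · subst h1
    refine tendsto_const_nhds.congr' ?_
    filter_upwards [eventually_ne_atTop 0] with n hn
    simpa using (cesaroMean_const (1 : ℂ) hn).symm
  · have hgeom (n : ℕ) : ‖∑ k ∈ Finset.Icc 1 n, x ^ k‖ ≤ 2 / ‖x - 1‖ := by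
      have hsum : ∑ k ∈ Finset.Icc 1 n, x ^ k = x * ((x ^ n - 1) / (x - 1)) := by
        rw [← Finset.Ico_add_one_right_eq_Icc, Finset.sum_Ico_eq_sum_range, Nat.add_sub_cancel,
          ← geom_sum_eq h1, Finset.mul_sum]
        simp [pow_add, pow_succ, mul_comm]
      have hnum : ‖x ^ n - 1‖ ≤ 2 :=
        calc ‖x ^ n - 1‖ ≤ ‖x‖ ^ n + ‖(1 : ℂ)‖ := by simpa using norm_sub_le (x ^ n) 1
          _ ≤ 2 := by rw [norm_one]; linarith [pow_le_one₀ (n := n) (norm_nonneg x) hx]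
      rw [hsum, norm_mul, norm_div]
      calc ‖x‖ * (‖x ^ n - 1‖ / ‖x - 1‖) ≤ 1 * (2 / ‖x - 1‖) := by gcongr
        _ = 2 / ‖x - 1‖ := one_mul _
    have hbound (n : ℕ) : ‖cesaroMean (x ^ ·) n‖ ≤ 2 / ‖x - 1‖ / n := by
      rw [cesaroMean, norm_smul, div_eq_inv_mul _ (n : ℝ)]
      simp only [one_div, norm_inv, Complex.norm_natCast]
      gcongr
      exact hgeom n
    exact squeeze_zero_norm hbound (tendsto_const_div_atTop_nhds_zero_nat _)

end CesaroMean

theorem tendsto_cesaroMean_comp_mul {E : Type*} [NormedAddCommGroup E] [NormedSpace ℂ E]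
    [CompleteSpace E] {f : ℂ → E} (hf : Differentiable ℂ f) {a : ℂ} (ha : ‖a‖ = 1)
    (hroot : ∀ m : ℕ, 1 ≤ m → a ^ m ≠ 1) (z : ℂ) :
    Tendsto (fun n => cesaroMean (fun k => f (a ^ k * z)) n) atTop (𝓝 (f 0)) := by
  obtain ⟨P, hP⟩ : ∃ P, HasFPowerSeriesOnBall f P 0 ⊤ :=
    ⟨_, hf.hasFPowerSeriesOnBall 0 zero_lt_one⟩
  have hexp (w : ℂ) : HasSum (fun j => w ^ j • P.coeff j) (f w) := by
    simpa [FormalMultilinearSeries.apply_eq_pow_smul_coeff] using hP.hasSum (y := w) (by simp)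
  have hmean (n : ℕ) : HasSum (fun j => cesaroMean (fun k => (a ^ j) ^ k) n • z ^ j • P.coeff j)
      (cesaroMean (fun k => f (a ^ k * z)) n) := by
    rw [cesaroMean]
    convert (hasSum_sum (s := Finset.Icc 1 n) fun k _ => hexp (a ^ k * z)).const_smul
      (1 / (n : ℂ)) using 1
    ext j
    simp only [cesaroMean, smul_eq_mul, Finset.smul_sum, smul_smul, Finset.mul_sum,
      Finset.sum_mul, Finset.sum_smul]
    exact Finset.sum_congr rfl fun k _ => by ring_nf
  have hsumm : Summable fun j => ‖z ^ j • P.coeff j‖ := by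
    simpa [FormalMultilinearSeries.apply_eq_pow_smul_coeff] using
      P.summable_norm_apply (x := z) (by simp [top_le_iff.mp hP.r_le])
  have hbound (n j : ℕ) : ‖cesaroMean (fun k => (a ^ j) ^ k) n • z ^ j • P.coeff j‖
      ≤ ‖z ^ j • P.coeff j‖ := by
    refine (norm_smul_le _ _).trans (mul_le_of_le_one_left (norm_nonneg _) ?_)
    exact norm_cesaroMean_le zero_le_one fun k _ => by simp [ha]
  have hlim (j : ℕ) := (tendsto_cesaroMean_pow (x := a ^ j) (by simp [ha])).smul_const
    (z ^ j • P.coeff j)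
  -- Only `j = 0` survives, so the limit series is the Taylor series of `f` at `0 * z`.
  have hzero (j : ℕ) : (if a ^ j = 1 then (1 : ℂ) else 0) • z ^ j • P.coeff j
      = (0 * z) ^ j • P.coeff j := by
    rcases Nat.eq_zero_or_pos j with rfl | hj
    · simp
    · simp [hroot j hj, zero_pow hj.ne']
  simp only [hzero] at hlim
  simpa [(hmean _).tsum_eq, (hexp _).tsum_eq] using
    tendsto_tsum_of_dominated_convergence hsumm hlim (Eventually.of_forall hbound)

section MeasurePreserving

variable {α : Type*} [MeasurableSpace α] {μ : Measure α} {e : α → α}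

theorem MeasureTheory.MeasurePreserving.identDistrib_comp {β : Type*} [MeasurableSpace β]
    (he : MeasurePreserving e μ μ) {g : α → β} (hg : AEMeasurable g μ) :
    IdentDistrib (g ∘ e) g μ μ where
  aemeasurable_fst := hg.comp_quasiMeasurePreserving he.quasiMeasurePreserving
  aemeasurable_snd := hg
  map_eq := by
    rw [← AEMeasurable.map_map_of_aemeasurable (by rwa [he.map_eq]) he.aemeasurable, he.map_eq]

theorem MeasureTheory.MeasurePreserving.withDensity (he : MeasurePreserving e μ μ)
    {d : α → ℝ≥0∞} (hd : Measurable d) (hde : ∀ x, d (e x) = d x) :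
    MeasurePreserving e (μ.withDensity d) (μ.withDensity d) := by
  refine ⟨he.measurable, Measure.ext fun s hs => ?_⟩
  rw [Measure.map_apply he.measurable hs, withDensity_apply _ hs,
    withDensity_apply _ (he.measurable hs), ← he.setLIntegral_comp_preimage hs hd]
  simp only [hde]

end MeasurePreserving

section Lp

variable {α E : Type*} [MeasurableSpace α] {μ : Measure α} {p : ℝ≥0∞}
  [NormedAddCommGroup E] [NormedSpace ℂ E]

theorem eLpNorm_cesaroMean_le {g : ℕ → α → E} (hp : 1 ≤ p)
    (hg : ∀ k, AEStronglyMeasurable (g k) μ) {M : ℝ≥0∞} {n : ℕ}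
    (h : ∀ k ∈ Finset.Icc 1 n, eLpNorm (g k) p μ ≤ M) : eLpNorm (cesaroMean g n) p μ ≤ M := by
  calc eLpNorm (cesaroMean g n) p μ ≤ ‖(1 / (n : ℂ))‖ₑ * (n * M) := by
        rw [cesaroMean, eLpNorm_const_smul]
        gcongr
        refine (eLpNorm_sum_le (fun k _ => hg k) hp).trans ?_
        simpa using Finset.sum_le_sum h
    _ ≤ M := by
        rw [← mul_assoc]
        exact mul_le_of_le_one_left' (enorm_one_div_natCast_mul_le_one n)

theorem MeasureTheory.UnifIntegrable.cesaroMean {g : ℕ → α → E} (hg : UnifIntegrable g p μ)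
    (hp : 1 ≤ p) (hmeas : ∀ k, AEStronglyMeasurable (g k) μ) :
    UnifIntegrable (_root_.cesaroMean g) p μ := by
  intro ε hε
  obtain ⟨δ, hδ, h⟩ := hg hε
  refine ⟨δ, hδ, fun n s hs hμs => ?_⟩
  have hind : s.indicator (_root_.cesaroMean g n)
      = _root_.cesaroMean (fun k => s.indicator (g k)) n := by
    ext x
    by_cases hx : x ∈ s <;> simp [hx, _root_.cesaroMean]
  rw [hind]
  exact eLpNorm_cesaroMean_le hp (fun k => (hmeas k).indicator hs) fun k _ => h k s hs hμs

theorem tendsto_eLpNorm_cesaroMean_comp_sub [MeasurableSpace E] [BorelSpace E]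
    [IsFiniteMeasure μ] (hp : 1 ≤ p) (hp' : p ≠ ∞) {e : ℕ → α → α}
    (he : ∀ k, MeasurePreserving (e k) μ μ) {g h : α → E} (hg : MemLp g p μ) (hh : MemLp h p μ)
    (hlim : ∀ᵐ x ∂μ, Tendsto (fun n => cesaroMean (fun k => g (e k x)) n) atTop (𝓝 (h x))) :
    Tendsto (fun n => eLpNorm (cesaroMean (fun k => g ∘ e k) n - h) p μ) atTop (𝓝 0) := by
  have hmeas (k : ℕ) : AEStronglyMeasurable (g ∘ e k) μ := hg.1.comp_measurePreserving (he k)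
  have hident (k : ℕ) : IdentDistrib (g ∘ e k) (g ∘ e 0) μ μ :=
    ((he k).identDistrib_comp hg.1.aemeasurable).trans
      ((he 0).identDistrib_comp hg.1.aemeasurable).symm
  have hui : UnifIntegrable (fun k => g ∘ e k) p μ :=
    (MemLp.uniformIntegrable_of_identDistrib (f := fun k => g ∘ e k) hp hp'
      (hg.comp_measurePreserving (he 0)) hident).unifIntegrable
  refine tendsto_Lp_finite_of_tendsto_ae hp hp' (fun n => ?_) hh (hui.cesaroMean hp hmeas) ?_
  · exact (Finset.aestronglyMeasurable_sum _ fun k _ => hmeas k).const_smul _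
  · simpa only [cesaroMean_apply, Function.comp_apply] using hlim

end Lp

noncomputable def fockMeasure (p : ℝ) : Measure ℂ :=
  volume.withDensity fun z => ENNReal.ofReal (Real.exp (-(p * ‖z‖ ^ 2) / 2))

section FockMeasure

variable {p : ℝ}

theorem isFiniteMeasure_fockMeasure (hp : 0 < p) : IsFiniteMeasure (fockMeasure p) := by
  have hb : 0 < ((p / 2 : ℝ) : ℂ).re := by simpa using half_pos hp
  have hint : Integrable fun z : ℂ => Real.exp (-(p * ‖z‖ ^ 2) / 2) := by
    refine (GaussianFourier.integrable_cexp_neg_mul_sq_norm_add hb 0 (0 : ℂ)).norm.congr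
      (Eventually.of_forall fun z => ?_)
    simp only [Complex.norm_exp, zero_mul, add_zero, neg_mul, Complex.neg_re,
      ← Complex.ofReal_pow, ← Complex.ofReal_mul, Complex.ofReal_re]
    ring_nf
  exact isFiniteMeasure_withDensity_ofReal hint.2

theorem measurePreserving_mul_fockMeasure {b : ℂ} (hb : ‖b‖ = 1) :
    MeasurePreserving (b * ·) (fockMeasure p) (fockMeasure p) := by
  have hrot : MeasurePreserving (b * ·) := by
    let c : Circle := ⟨b, mem_sphere_zero_iff_norm.2 hb⟩
    convert (rotation c).measurePreserving using 1
    exact funext fun z => (rotation_apply c z).symm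
  exact hrot.withDensity (by fun_prop) fun z => by simp [hb]

theorem lintegral_enorm_rpow_fockMeasure (hp : 0 ≤ p) (g : ℂ → ℂ) :
    ∫⁻ z, ‖g z‖ₑ ^ p ∂fockMeasure p
      = ∫⁻ z, ENNReal.ofReal (‖g z‖ ^ p * Real.exp (-(p * ‖z‖ ^ 2) / 2)) := by
  rw [fockMeasure, lintegral_withDensity_eq_lintegral_mul_non_measurable _ (by fun_prop)
    (Eventually.of_forall fun _ => ENNReal.ofReal_lt_top)]
  refine lintegral_congr fun z => ?_
  rw [Pi.mul_apply, mul_comm, ENNReal.ofReal_mul (by positivity), ← ofReal_norm,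
    ENNReal.ofReal_rpow_of_nonneg (norm_nonneg _) hp]

theorem memLp_fockMeasure (hp : 0 < p) {g : ℂ → ℂ} (hg : AEStronglyMeasurable g)
    (hint : Integrable fun z => ‖g z‖ ^ p * Real.exp (-(p * ‖z‖ ^ 2) / 2)) :
    MemLp g (ENNReal.ofReal p) (fockMeasure p) := by
  refine ⟨hg.mono_ac (withDensity_absolutelyContinuous _ _), ?_⟩
  rw [eLpNorm_lt_top_iff_lintegral_rpow_enorm_lt_top (by simpa using hp) ENNReal.ofReal_ne_top,
    ENNReal.toReal_ofReal hp.le, lintegral_enorm_rpow_fockMeasure hp.le]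
  exact hint.lintegral_lt_top

theorem fockNorm_eq_eLpNorm (hp : 0 < p) {g : ℂ → ℂ} (hg : AEStronglyMeasurable g) :
    fockNorm p g = (p / (2 * Real.pi)) ^ (1 / p)
      * (eLpNorm g (ENNReal.ofReal p) (fockMeasure p)).toReal := by
  have hmeas : AEStronglyMeasurable fun z => ‖g z‖ ^ p * Real.exp (-(p * ‖z‖ ^ 2) / 2) :=
    ((hg.aemeasurable.norm.pow_const p).mul (by fun_prop)).aestronglyMeasurable
  rw [eLpNorm_eq_lintegral_rpow_enorm_toReal (by simpa using hp) ENNReal.ofReal_ne_top,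
    ENNReal.toReal_ofReal hp.le, lintegral_enorm_rpow_fockMeasure hp.le, ← ENNReal.toReal_rpow,
    ← integral_eq_lintegral_of_nonneg_ae (Eventually.of_forall fun z => by positivity) hmeas,
    fockNorm, Real.mul_rpow (by positivity) (integral_nonneg fun z => by positivity)]

theorem tendsto_fockNorm_zero {ι : Type*} {l : Filter ι} (hp : 0 < p) {g : ι → ℂ → ℂ}
    (hg : ∀ i, AEStronglyMeasurable (g i))
    (h : Tendsto (fun i => eLpNorm (g i) (ENNReal.ofReal p) (fockMeasure p)) l (𝓝 0)) :
    Tendsto (fun i => fockNorm p (g i)) l (𝓝 0) := by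
  simp_rw [fockNorm_eq_eLpNorm hp (hg _)]
  simpa using ((ENNReal.tendsto_toReal ENNReal.zero_ne_top).comp h).const_mul
    ((p / (2 * Real.pi)) ^ (1 / p))

end FockMeasure

/-- Theorem 4.5(ii): if `|a| = 1` and `a` is not a root of unity, the
composition operator `f ↦ f(a·)` is mean ergodic on `F_p` with limit projection
`f ↦ f(0)·1`. -/
theorem mean_ergodic_composition_rotation (p : ℝ) (hp : 1 ≤ p) (a : ℂ)
    (ha : ‖a‖ = 1) (hroot : ∀ m : ℕ, 1 ≤ m → a ^ m ≠ 1)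
    (f : ℂ → ℂ) (hf : Differentiable ℂ f)
    (hfp : Integrable (fun z : ℂ => ‖f z‖ ^ p *
      Real.exp (-(p * ‖z‖ ^ 2) / 2))) :
    Filter.Tendsto (fun n : ℕ =>
        fockNorm p (fun z =>
          (1 / (n : ℂ)) * ∑ k ∈ Finset.Icc 1 n, f (a ^ k * z) - f 0))
      Filter.atTop (nhds 0) := by
  have hp0 : 0 < p := zero_lt_one.trans_le hp
  have := isFiniteMeasure_fockMeasure hp0
  have hfc : Continuous f := hf.continuous
  have hLp := tendsto_eLpNorm_cesaroMean_comp_sub (ENNReal.one_le_ofReal.2 hp)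
    ENNReal.ofReal_ne_top (fun k => measurePreserving_mul_fockMeasure (by simp [ha]))
    (memLp_fockMeasure hp0 hfc.aestronglyMeasurable hfp) (memLp_const (f 0))
    (ae_of_all _ (tendsto_cesaroMean_comp_mul hf ha hroot))
  refine tendsto_fockNorm_zero hp0 (fun n => Continuous.aestronglyMeasurable (by fun_prop)) ?_
  refine hLp.congr fun n => congrArg (eLpNorm · _ _) (funext fun z => ?_)
  rw [Pi.sub_apply, cesaroMean_apply]
  rfl
end
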